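/- arXiv:1602.05888 — 7 statements merged into one kernel-verified Lean document; each statement's English description precedes it below -/
import Mathlib

section
/- Let χ be a nontrivial multiplicative character of F_q of order greater than 2, and ρ the quadratic character of F_q. Then χ(4)·J(χ,χ) = J(χ,ρ), where J denotes the Jacobi sum. -/
/-- If `χ` is a multiplicative character of order greater than `2` of a finite
field `F` of odd characteristic, and `ρ` is the quadratic character, then
`χ(4) * J(χ,χ) = J(χ,ρ)`. -/
theorem slce_stmt_3 (F : Type*) [Field F] [Fintype F] [DecidableEq F]
    (hF : ringChar F ≠ 2) (χ : MulChar F ℂ) (hχ : 2 < orderOf χ) :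
    χ 4 * jacobiSum χ χ =
      jacobiSum χ ((quadraticChar F).ringHomComp (Int.castRingHom ℂ)) := by
  have h2 : (2 : F) ≠ 0 := Ring.two_ne_zero hF
  have hχ1 : χ ≠ 1 := by
    intro h
    rw [h, orderOf_one] at hχ
    omega
  -- Step 1: χ 4 * J(χ,χ) = ∑ u, χ (1 - u ^ 2)
  have step1 : χ 4 * jacobiSum χ χ = ∑ u : F, χ (1 - u ^ 2) := by
    rw [jacobiSum, Finset.mul_sum]
    have hbij : Function.Bijective (fun x : F => 2 * x - 1) := by
      refine Finite.injective_iff_bijective.mp fun a b hab => ?_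
      have : 2 * a = 2 * b := by linear_combination hab
      exact mul_left_cancel₀ h2 this
    rw [← Function.Bijective.sum_comp hbij (fun u => χ (1 - u ^ 2))]
    refine Finset.sum_congr rfl fun x _ => ?_
    have : (1 : F) - (2 * x - 1) ^ 2 = 4 * (x * (1 - x)) := by ring
    simp only [this, map_mul]
  -- Step 2: count square roots
  have step2 : ∀ s : F,
      ({u : F | u ^ 2 = s}.toFinset.card : ℂ) = (quadraticChar F s : ℂ) + 1 := by
    intro s
    have := quadraticChar_card_sqrts hF s
    exact_mod_cast congrArg (fun n : ℤ => (n : ℂ)) this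
  have step3 : (∑ u : F, χ (1 - u ^ 2)) =
      ∑ s : F, ((quadraticChar F s : ℂ) + 1) * χ (1 - s) := by
    rw [← Finset.sum_fiberwise' Finset.univ (fun u : F => u ^ 2) (fun s => χ (1 - s))]
    refine Finset.sum_congr rfl fun s _ => ?_
    rw [Finset.sum_const, nsmul_eq_mul, ← step2 s]
    congr 1
    rw [Set.toFinset_setOf]
  -- Step 4: split the sum
  have hsum0 : (∑ s : F, χ (1 - s)) = 0 := by
    have h := Equiv.sum_comp (Equiv.subLeft (1 : F)) (χ : F → ℂ)
    simp only [Equiv.subLeft_apply] at h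
    rw [h]
    exact MulChar.sum_eq_zero_of_ne_one hχ1
  rw [step1, step3]
  have : (∑ s : F, ((quadraticChar F s : ℂ) + 1) * χ (1 - s)) =
      (∑ s : F, (quadraticChar F s : ℂ) * χ (1 - s)) + ∑ s : F, χ (1 - s) := by
    rw [← Finset.sum_add_distrib]
    exact Finset.sum_congr rfl fun s _ => by ring
  rw [this, hsum0, add_zero, jacobiSum_comm]
  rfl
end

section
/- Let D = {α^{2i+1} - 1 : 0 ≤ i ≤ q-2} ∩ F_q^* be the SLCE set in F_q^*, and let Z be the complement in F_q^* of the set Y = {x(1-x) : x ∈ F_q^*} ∩ F_q^*. Then Z = (-4)^{-1}·D, i.e., Z is the translate (under multiplication) of D by (-4)^{-1}. -/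
/-- Lempel–Cohn–Eastman: Let `α` be a primitive element of the finite field `F`
(of odd order), `D = {α^(2i+1) - 1} ∩ Fˣ` the SLCE set, `Y = {x(1-x) : x ∈ Fˣ} ∩ Fˣ` and
`Z = Fˣ \ Y`.  Then `Z = (-4)⁻¹ · D`. -/
theorem slce_stmt_5 (F : Type*) [Field F] [Fintype F]
    (hF : ringChar F ≠ 2) (α : F)
    (hα : ∀ x : F, x ≠ 0 → ∃ n : ℕ, α ^ n = x)
    (D Y Z : Set F)
    (hD : D = {y : F | y ≠ 0 ∧ ∃ i : ℕ, y = α ^ (2 * i + 1) - 1})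
    (hY : Y = {y : F | y ≠ 0 ∧ ∃ x : F, x ≠ 0 ∧ y = x * (1 - x)})
    (hZ : Z = {y : F | y ≠ 0} \ Y) :
    Z = (fun d : F => (-4 : F)⁻¹ * d) '' D := by
  have h2 : (2:F) ≠ 0 := Ring.two_ne_zero hF
  have h4 : (4:F) ≠ 0 := by
    have h : (4:F) = 2*2 := by norm_num
    rw [h]; exact mul_ne_zero h2 h2
  have hα0 : α ≠ 0 := by
    rintro rfl
    obtain ⟨n, hn⟩ := hα 2 h2
    rcases n with _ | n
    · simp at hn
      exact one_ne_zero (α := F) (by linear_combination -hn)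
    · rw [pow_succ, mul_zero] at hn
      exact h2 hn.symm
  have hαsq : ¬ IsSquare α := by
    rintro ⟨β, hβ⟩
    obtain ⟨a, ha⟩ := FiniteField.exists_nonsquare (F := F) hF
    have ha0 : a ≠ 0 := by rintro rfl; exact ha ⟨0, by ring⟩
    obtain ⟨n, hn⟩ := hα a ha0
    exact ha ⟨β ^ n, by rw [← hn, hβ]; ring⟩
  have key : ∀ u : F, u ≠ 0 → (¬ IsSquare u ↔ ∃ i : ℕ, u = α ^ (2*i+1)) := by
    intro u hu
    constructor
    · intro h
      obtain ⟨n, hn⟩ := hα u hu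
      rcases Nat.even_or_odd n with he | ho
      · obtain ⟨k, hk⟩ := he
        exact absurd ⟨α ^ k, by rw [← hn, hk]; ring⟩ h
      · obtain ⟨i, hi⟩ := ho
        exact ⟨i, by rw [← hn, hi]⟩
    · rintro ⟨i, rfl⟩ ⟨β, hβ⟩
      apply hαsq
      have hαi : (α:F) ^ i ≠ 0 := pow_ne_zero _ hα0
      refine ⟨β * (α ^ i)⁻¹, ?_⟩
      field_simp
      linear_combination hβ
  have claimA : ∀ z : F, z ≠ 0 →
      ((∃ x : F, x ≠ 0 ∧ z = x*(1-x)) ↔ IsSquare (1 - 4*z)) := by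
    intro z hz
    constructor
    · rintro ⟨x, hx, rfl⟩
      exact ⟨1 - 2*x, by ring⟩
    · rintro ⟨w, hw⟩
      have hx : ((1-w)/2) * (1 - (1-w)/2) = z := by
        field_simp
        linear_combination hw
      refine ⟨(1-w)/2, ?_, hx.symm⟩
      intro h0
      apply hz
      rw [← hx, h0, zero_mul]
  subst hD hY hZ
  ext z
  simp only [Set.mem_diff, Set.mem_setOf_eq, Set.mem_image]
  constructor
  · rintro ⟨hz, hzY⟩
    have hns : ¬ IsSquare (1 - 4*z) := fun hs => hzY ⟨hz, (claimA z hz).mpr hs⟩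
    have h10 : (1 - 4*z) ≠ 0 := by
      intro h; exact hns (h ▸ ⟨0, by ring⟩)
    obtain ⟨i, hi⟩ := (key _ h10).mp hns
    refine ⟨-4*z, ⟨?_, i, by linear_combination hi⟩, ?_⟩
    · intro h
      apply hz
      have hm4 : (-4:F) ≠ 0 := neg_ne_zero.mpr h4
      have h' : (-4:F) * z = 0 := by linear_combination h
      exact (mul_eq_zero.mp h').resolve_left hm4
    · field_simp
  · rintro ⟨d, ⟨hd0, i, rfl⟩, rfl⟩
    have hm4 : (-4:F) ≠ 0 := neg_ne_zero.mpr h4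
    set z := (-4:F)⁻¹ * (α ^ (2*i+1) - 1) with hzdef
    have hz : z ≠ 0 := mul_ne_zero (inv_ne_zero hm4) hd0
    refine ⟨hz, ?_⟩
    rintro ⟨-, hx⟩
    have hs := (claimA z hz).mp hx
    have h1 : 1 - 4*z = α ^ (2*i+1) := by
      rw [hzdef]; field_simp; ring
    exact (key _ (pow_ne_zero _ hα0)).mpr ⟨i, rfl⟩ (h1 ▸ hs)
end

section
/- Let χ be a multiplicative character of F_q of odd order k > 1, let D^c be the complement in F_q^* of the SLCE set D. Then Σ_{y ∈ D^c} χ(y) = (1/2)·χ(-1)·(K(χ) + 1), where K(χ) = χ(4)J(χ,χ). -/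
/-!
Write `η` for the quadratic character. Since `α` generates `Fˣ` and `Fˣ` has non-squares,
`η α = -1`, so for `y ≠ 0` we have `y ∈ D` iff `η (y + 1) = -1`. Hence on `Fˣ` the indicator
of `Dᶜ` is `(1 + η (y + 1)) / 2`, corrected at `y = -1`. Summing against `χ` gives
`(χ (-1) + χ (-1) J(χ, η)) / 2`, and `J(χ, η) = χ(4) J(χ, χ)` because
`4x(1 - x) = 1 - (2x - 1)²` and `η t + 1` counts the square roots of `t`.
-/

open Finset

section

variable {F : Type*} [Field F] [Fintype F]

section Generator

variable [DecidableEq F] {α : F}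

lemma quadraticChar_eq_neg_one_of_forall_exists_pow_eq (hF : ringChar F ≠ 2)
    (hα : ∀ x : F, x ≠ 0 → ∃ n : ℕ, α ^ n = x) : quadraticChar F α = -1 := by
  obtain ⟨a, ha⟩ := FiniteField.exists_nonsquare hF
  obtain ⟨n, rfl⟩ := hα a fun h => ha (h ▸ IsSquare.zero)
  exact quadraticChar_neg_one_iff_not_isSquare.mpr fun h => ha (h.pow n)

lemma quadraticChar_add_one_eq_neg_one_iff (hF : ringChar F ≠ 2)
    (hα : ∀ x : F, x ≠ 0 → ∃ n : ℕ, α ^ n = x) (y : F) :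
    quadraticChar F (y + 1) = -1 ↔ ∃ i : ℕ, y = α ^ (2 * i + 1) - 1 := by
  have hqα := quadraticChar_eq_neg_one_of_forall_exists_pow_eq hF hα
  constructor
  · intro hy
    have hy0 : y + 1 ≠ 0 := fun h => by simp [h] at hy
    obtain ⟨n, hn⟩ := hα (y + 1) hy0
    rw [← hn, map_pow, hqα, neg_one_pow_eq_neg_one_iff_odd (by decide)] at hy
    obtain ⟨i, rfl⟩ := hy
    exact ⟨i, by rw [hn]; ring⟩
  · rintro ⟨i, rfl⟩
    rw [sub_add_cancel, map_pow, hqα, (odd_two_mul_add_one i).neg_one_pow]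

end Generator

section Jacobi

variable {R : Type*} [CommRing R]

lemma sum_apply_mul_apply_add_one (χ ψ : MulChar F R) :
    ∑ y : F, χ y * ψ (y + 1) = χ (-1) * jacobiSum χ ψ := by
  rw [jacobiSum, mul_sum]
  refine (Fintype.sum_equiv (Equiv.neg F) _ _ fun x => ?_).symm
  rw [Equiv.neg_apply, neg_eq_neg_one_mul x, map_mul, neg_one_mul, neg_add_eq_sub, mul_assoc]

lemma mul_jacobiSum_self_eq_sum_one_sub_sq (hF : ringChar F ≠ 2) (χ : MulChar F R) :
    χ 4 * jacobiSum χ χ = ∑ v : F, χ (1 - v ^ 2) := by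
  have h2 : (2 : F) ≠ 0 := Ring.two_ne_zero hF
  have hbij : Function.Bijective fun x : F => 2 * x - 1 := by
    refine ⟨fun a b hab => mul_left_cancel₀ h2 (sub_left_inj.mp hab), fun v => ⟨(v + 1) / 2, ?_⟩⟩
    field_simp
    ring
  rw [jacobiSum, mul_sum]
  refine Fintype.sum_bijective _ hbij _ _ fun x => ?_
  rw [← map_mul, ← map_mul]
  ring_nf

variable [DecidableEq F]

lemma sum_sq_eq_sum_quadraticChar_add_one_smul {M : Type*} [AddCommGroup M]
    (hF : ringChar F ≠ 2) (f : F → M) :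
    ∑ v : F, f (v ^ 2) = ∑ t : F, (quadraticChar F t + 1) • f t := by
  rw [← sum_fiberwise univ (· ^ 2) fun v => f (v ^ 2)]
  refine sum_congr rfl fun t _ => ?_
  rw [sum_congr rfl fun v hv => by rw [(mem_filter.mp hv).2], sum_const,
    ← quadraticChar_card_sqrts hF t, natCast_zsmul]
  congr 2
  ext v
  simp

lemma mul_jacobiSum_self_eq_jacobiSum_quadraticChar [IsDomain R] (hF : ringChar F ≠ 2)
    {χ : MulChar F R} (hχ : χ ≠ 1) :
    χ 4 * jacobiSum χ χ =
      jacobiSum χ ((quadraticChar F).ringHomComp (Int.castRingHom R)) := by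
  have hshift : ∑ t : F, χ (1 - t) = 0 :=
    (Fintype.sum_equiv (Equiv.subLeft 1) _ χ fun t => rfl).trans
      (MulChar.sum_eq_zero_of_ne_one hχ)
  rw [mul_jacobiSum_self_eq_sum_one_sub_sq hF,
    sum_sq_eq_sum_quadraticChar_add_one_smul hF fun t => χ (1 - t), jacobiSum_comm, jacobiSum]
  simp only [add_smul, one_smul, sum_add_distrib, hshift, add_zero, zsmul_eq_mul,
    MulChar.ringHomComp_apply, Int.coe_castRingHom]

-- For `y ≠ 0`, `2 · [η (y + 1) ≠ -1] = 1 + η (y + 1) + [y = -1]`.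
lemma two_mul_sum_filter_quadraticChar_add_one_ne_neg_one [Nontrivial R] (χ : MulChar F R) :
    2 * ∑ y ∈ univ.filter (fun y : F => y ≠ 0 ∧ quadraticChar F (y + 1) ≠ -1), χ y =
      ∑ y : F, χ y + ∑ y : F, χ y * (quadraticChar F).ringHomComp (Int.castRingHom R) (y + 1)
        + χ (-1) := by
  have hpt : χ (-1) = ∑ y : F, if y = -1 then χ y else 0 := by simp
  rw [sum_filter, mul_sum, hpt, ← sum_add_distrib, ← sum_add_distrib]
  refine sum_congr rfl fun y _ => ?_
  by_cases hy : y = -1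
  · subst hy
    simp [two_mul]
  have hy1 : y + 1 ≠ 0 := fun h => hy (eq_neg_of_add_eq_zero_left h)
  rcases eq_or_ne y 0 with rfl | hy0
  · simp [MulChar.map_zero]
  rcases quadraticChar_dichotomy hy1 with h | h
  · rw [if_pos ⟨hy0, by rw [h]; decide⟩, if_neg hy, MulChar.ringHomComp_apply, h,
      eq_intCast, Int.cast_one]
    ring
  · simp [h, hy, hy0]

end Jacobi

end

theorem slce_stmt_6_general (F : Type*) [Field F] [Fintype F] [DecidableEq F]
    (hF : ringChar F ≠ 2) (α : F)
    (hα : ∀ x : F, x ≠ 0 → ∃ n : ℕ, α ^ n = x)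
    (χ : MulChar F ℂ) (hk1 : 1 < orderOf χ)
    (D : Set F) [DecidablePred (· ∈ D)]
    (hD : D = {y : F | y ≠ 0 ∧ ∃ i : ℕ, y = α ^ (2 * i + 1) - 1}) :
    ∑ y ∈ Finset.univ.filter (fun y : F => y ≠ 0 ∧ y ∉ D), χ y =
      (1 / 2 : ℂ) * χ (-1) * (χ 4 * jacobiSum χ χ + 1) := by
  have hχ : χ ≠ 1 := by
    rintro rfl
    simp at hk1
  have hcompl : univ.filter (fun y : F => y ≠ 0 ∧ y ∉ D) =
      univ.filter (fun y : F => y ≠ 0 ∧ quadraticChar F (y + 1) ≠ -1) := by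
    ext y
    simp only [mem_filter, mem_univ, true_and, hD, Set.mem_ofPred_eq,
      ← quadraticChar_add_one_eq_neg_one_iff hF hα]
    tauto
  have htwice := two_mul_sum_filter_quadraticChar_add_one_ne_neg_one χ
  rw [← hcompl, MulChar.sum_eq_zero_of_ne_one hχ, sum_apply_mul_apply_add_one,
    ← mul_jacobiSum_self_eq_jacobiSum_quadraticChar hF hχ] at htwice
  linear_combination htwice / 2

/-- Let `χ` be a multiplicative character of odd order `k > 1` of the finite
field `F` (of odd order), and `Dᶜ` the complement in `Fˣ` of the SLCE set `D`.  Then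
`∑_{y ∈ Dᶜ} χ(y) = (1/2) * χ(-1) * (K(χ) + 1)`, where `K(χ) = χ(4) * J(χ,χ)`. -/
theorem slce_stmt_6 (F : Type*) [Field F] [Fintype F] [DecidableEq F]
    (hF : ringChar F ≠ 2) (α : F)
    (hα : ∀ x : F, x ≠ 0 → ∃ n : ℕ, α ^ n = x)
    (χ : MulChar F ℂ) (hk : Odd (orderOf χ)) (hk1 : 1 < orderOf χ)
    (D : Set F) [DecidablePred (· ∈ D)]
    (hD : D = {y : F | y ≠ 0 ∧ ∃ i : ℕ, y = α ^ (2 * i + 1) - 1}) :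
    ∑ y ∈ Finset.univ.filter (fun y : F => y ≠ 0 ∧ y ∉ D), χ y =
      (1 / 2 : ℂ) * χ (-1) * (χ 4 * jacobiSum χ χ + 1) :=
  slce_stmt_6_general F hF α hα χ hk1 D hD
end

section
/- Let k be odd, p an odd prime with [(ℤ/kℤ)^* : ⟨p⟩] = 2, and suppose -1 ∉ ⟨p⟩ in (ℤ/kℤ)^*. Then (ℤ/kℤ)^* = ⟨p⟩ × ⟨-1⟩ (an internal direct product), and consequently k is either a power of a single odd prime or a product of powers of exactly two odd primes. -/
open Subgroup

private lemma myIsCyclic_zpowers {G : Type*} [Group G] (g : G) : IsCyclic (zpowers g) :=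
  ⟨⟨⟨g, mem_zpowers g⟩, fun x => by
    obtain ⟨n, hn⟩ := Subgroup.mem_zpowers_iff.mp x.2
    exact ⟨n, Subtype.ext (by simpa using hn)⟩⟩⟩

/-- number of square roots of 1 -/
private noncomputable def sqCard (G : Type*) [Monoid G] : ℕ := Nat.card {x : G // x ^ 2 = 1}

private lemma sqCard_congr {G G' : Type*} [Monoid G] [Monoid G'] (e : G ≃* G') :
    sqCard G = sqCard G' := by
  refine Nat.card_congr (Equiv.subtypeEquiv e.toEquiv fun x => ?_)
  show x ^ 2 = 1 ↔ e x ^ 2 = 1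
  rw [← map_pow]
  exact ⟨fun h => by rw [h, map_one], fun h => e.injective (by rw [h, map_one])⟩

private lemma sqCard_prod (A B : Type*) [Monoid A] [Monoid B] :
    sqCard (A × B) = sqCard A * sqCard B := by
  refine (Nat.card_congr ((Equiv.subtypeEquivRight fun x : A × B => ?_).trans
    (Equiv.subtypeProdEquivProd (p := fun a : A => a ^ 2 = 1)
      (q := fun b : B => b ^ 2 = 1)))).trans (Nat.card_prod _ _)
  rw [Prod.pow_def]
  exact Prod.ext_iff

private lemma sqCard_zmod_mul (a b : ℕ) (hab : Nat.Coprime a b) :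
    sqCard (ZMod (a * b))ˣ = sqCard (ZMod a)ˣ * sqCard (ZMod b)ˣ := by
  rw [sqCard_congr (Units.mapEquiv (ZMod.chineseRemainder hab).toMulEquiv),
    sqCard_congr MulEquiv.prodUnits, sqCard_prod]

private lemma two_le_sqCard_zmod (m : ℕ) (hm : 2 < m) : 2 ≤ sqCard (ZMod m)ˣ := by
  haveI : NeZero m := ⟨by omega⟩
  haveI : Fact (2 < m) := ⟨hm⟩
  have hne : (⟨(-1 : (ZMod m)ˣ), by rw [neg_one_sq]⟩ : {x : (ZMod m)ˣ // x ^ 2 = 1}) ≠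
      ⟨1, one_pow 2⟩ := by
    intro h
    have h2 : (-1 : (ZMod m)ˣ) = 1 := congrArg Subtype.val h
    have h3 : (-1 : ZMod m) = 1 := by
      have := congrArg Units.val h2
      simpa using this
    exact ZMod.neg_one_ne_one h3
  have : Nontrivial {x : (ZMod m)ˣ // x ^ 2 = 1} := ⟨_, _, hne⟩
  exact Finite.one_lt_card_iff_nontrivial.mpr this

private lemma sqCard_le_four {G : Type*} [CommGroup G] [Fintype G] (H : Subgroup G)
    [IsCyclic H] (hH : H.index = 2) : sqCard G ≤ 4 := by
  classical
  set S : Subgroup G := (powMonoidHom 2 : G →* G).ker with hS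
  have hmemS : ∀ x : G, x ∈ S ↔ x ^ 2 = 1 := fun x => by
    simp [hS, MonoidHom.mem_ker, powMonoidHom_apply]
  have hScard : sqCard G = Nat.card S :=
    Nat.card_congr (Equiv.subtypeEquivRight fun x => (hmemS x).symm)
  have h1 : Nat.card S = (H.subgroupOf S).index * Nat.card (H.subgroupOf S) := by
    rw [Subgroup.card_eq_card_quotient_mul_card_subgroup (H.subgroupOf S),
      Subgroup.index_eq_card]
  have hidx : (H.subgroupOf S).index ≤ 2 := by
    have : H.relIndex S ∣ H.index := Subgroup.relIndex_dvd_index_of_normal H S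
    rw [hH] at this
    exact Nat.le_of_dvd (by norm_num) this
  have hsub : Nat.card (H.subgroupOf S) ≤ 2 := by
    have hf : Function.Injective (fun x : H.subgroupOf S =>
        (⟨⟨((x : S) : G), Subgroup.mem_subgroupOf.mp x.2⟩,
          Subtype.ext (by
            have := (hmemS _).mp (x : S).2
            simpa using this)⟩ : {h : H // h ^ 2 = 1})) := by
      intro x y hxy
      have : ((x : S) : G) = ((y : S) : G) :=
        congrArg (fun z => ((z : {h : H // h ^ 2 = 1}) : H).val) hxy
      exact Subtype.ext (Subtype.ext this)
    have h2 : Nat.card (H.subgroupOf S) ≤ Nat.card {h : H // h ^ 2 = 1} :=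
      Nat.card_le_card_of_injective _ hf
    have h3 : Nat.card {h : H // h ^ 2 = 1} ≤ 2 := by
      rw [Nat.card_eq_fintype_card, Fintype.card_subtype]
      exact IsCyclic.card_pow_eq_one_le (by norm_num)
    exact h2.trans h3
  calc sqCard G = (H.subgroupOf S).index * Nat.card (H.subgroupOf S) := hScard.trans h1
    _ ≤ 2 * 2 := Nat.mul_le_mul hidx hsub
    _ = 4 := rfl

/-- Let `k > 1` be odd, `p` a prime coprime to `k` with
`[(ℤ/kℤ)ˣ : ⟨p⟩] = 2` and `-1 ∉ ⟨p⟩`.  Then `(ℤ/kℤ)ˣ` is the internal direct product of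
`⟨p⟩` and `⟨-1⟩`, and consequently `k` is a power of a single odd prime or a product of
powers of exactly two odd primes. -/
theorem slce_stmt_11 (p k : ℕ) (hp : p.Prime)
    (hk : Odd k) (hk1 : 1 < k) (hcop : Nat.Coprime p k)
    (hindex : (Subgroup.zpowers (ZMod.unitOfCoprime p hcop)).index = 2)
    (hneg : (-1 : (ZMod k)ˣ) ∉ Subgroup.zpowers (ZMod.unitOfCoprime p hcop)) :
    (Subgroup.zpowers (ZMod.unitOfCoprime p hcop) ⊔
        Subgroup.zpowers (-1 : (ZMod k)ˣ) = ⊤ ∧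
      Subgroup.zpowers (ZMod.unitOfCoprime p hcop) ⊓
        Subgroup.zpowers (-1 : (ZMod k)ˣ) = ⊥) ∧
    ((∃ ℓ r : ℕ, ℓ.Prime ∧ Odd ℓ ∧ 0 < r ∧ k = ℓ ^ r) ∨
      (∃ ℓ₁ ℓ₂ r₁ r₂ : ℕ, ℓ₁.Prime ∧ ℓ₂.Prime ∧ Odd ℓ₁ ∧ Odd ℓ₂ ∧ ℓ₁ ≠ ℓ₂ ∧
        0 < r₁ ∧ 0 < r₂ ∧ k = ℓ₁ ^ r₁ * ℓ₂ ^ r₂)) := by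
  classical
  have hk0 : k ≠ 0 := by omega
  haveI : NeZero k := ⟨hk0⟩
  set u := ZMod.unitOfCoprime p hcop with hu
  set H := Subgroup.zpowers u with hH
  constructor
  · constructor
    · -- sup = ⊤
      set J := H ⊔ Subgroup.zpowers (-1 : (ZMod k)ˣ) with hJ
      have hle : H ≤ J := le_sup_left
      have hrel : H.relIndex J * J.index = 2 := by
        rw [Subgroup.relIndex_mul_index hle, hindex]
      have hdvd : J.index ∣ 2 := Dvd.intro_left _ hrel
      rcases (Nat.prime_two.eq_one_or_self_of_dvd _ hdvd) with h1 | h2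
      · exact Subgroup.index_eq_one.mp h1
      · exfalso
        have hr1 : H.relIndex J = 1 := by rw [h2] at hrel; omega
        have hJH : J ≤ H := Subgroup.relIndex_eq_one.mp hr1
        exact hneg (hJH (le_sup_right (a := H) (Subgroup.mem_zpowers _)))
    · -- inf = ⊥
      rw [eq_bot_iff]
      intro x hx
      rw [Subgroup.mem_inf] at hx
      obtain ⟨n, hn⟩ := Subgroup.mem_zpowers_iff.mp hx.2
      rcases Int.even_or_odd n with he | ho
      · rw [he.neg_one_zpow] at hn
        rw [Subgroup.mem_bot, ← hn]
      · exfalso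
        obtain ⟨m, rfl⟩ := ho
        have : ((-1 : (ZMod k)ˣ)) ^ (2 * m + 1) = -1 := by
          rw [zpow_add, Even.neg_one_zpow ⟨m, two_mul m⟩, one_mul, zpow_one]
        rw [this] at hn
        exact hneg (hn ▸ hx.1)
  · -- number-theoretic consequence
    haveI := myIsCyclic_zpowers u
    have hupper : sqCard (ZMod k)ˣ ≤ 4 := sqCard_le_four H hindex
    -- odd prime facts
    have hodd_of_mem : ∀ q ∈ k.primeFactors, q.Prime ∧ Odd q ∧ 3 ≤ q := by
      intro q hq
      have hqp := Nat.prime_of_mem_primeFactors hq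
      have hqdvd := Nat.dvd_of_mem_primeFactors hq
      have hqodd : Odd q := by
        rcases Nat.even_or_odd q with he | ho
        · exfalso
          have h2k : 2 ∣ k := he.two_dvd.trans hqdvd
          rw [Nat.odd_iff] at hk
          omega
        · exact ho
      refine ⟨hqp, hqodd, ?_⟩
      have := hqp.two_le
      rw [Nat.odd_iff] at hqodd
      omega
    -- at most two prime factors
    have hcard : k.primeFactors.card ≤ 2 := by
      by_contra hcon
      push_neg at hcon
      obtain ⟨t, hts, ht3⟩ := Finset.exists_subset_card_eq hcon
      obtain ⟨q₁, q₂, q₃, h12, h13, h23, rfl⟩ := Finset.card_eq_three.mp ht3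
      have hq1 : q₁ ∈ k.primeFactors := hts (by simp)
      have hq2 : q₂ ∈ k.primeFactors := hts (by simp)
      have hq3 : q₃ ∈ k.primeFactors := hts (by simp)
      obtain ⟨hq1p, _, hq1_3⟩ := hodd_of_mem _ hq1
      obtain ⟨hq2p, _, hq2_3⟩ := hodd_of_mem _ hq2
      obtain ⟨hq3p, _, hq3_3⟩ := hodd_of_mem _ hq3
      set a := q₁ ^ k.factorization q₁ with ha
      set m := k / q₁ ^ k.factorization q₁ with hm
      have ham : a * m = k := Nat.ordProj_mul_ordCompl_eq_self k q₁
      have hm0 : m ≠ 0 := (Nat.ordCompl_pos q₁ hk0).ne'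
      have hcop1 : Nat.Coprime a m := (Nat.coprime_ordCompl hq1p hk0).pow_left _
      have hmfac : m.factorization = k.factorization.erase q₁ :=
        Nat.factorization_ordCompl k q₁
      have hmem_m : ∀ q ∈ k.primeFactors, q ≠ q₁ → q ∈ m.primeFactors := by
        intro q hq hne
        rw [← Nat.support_factorization, Finsupp.mem_support_iff, hmfac,
          Finsupp.erase_ne hne, ← Finsupp.mem_support_iff, Nat.support_factorization]
        exact hq
      have hq2m := hmem_m _ hq2 h12.symm
      have hq3m := hmem_m _ hq3 h13.symm
      set b := q₂ ^ m.factorization q₂ with hb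
      set c := m / q₂ ^ m.factorization q₂ with hc
      have hbc : b * c = m := Nat.ordProj_mul_ordCompl_eq_self m q₂
      have hc0 : c ≠ 0 := (Nat.ordCompl_pos q₂ hm0).ne'
      have hcop2 : Nat.Coprime b c := (Nat.coprime_ordCompl hq2p hm0).pow_left _
      have hcfac : c.factorization = m.factorization.erase q₂ :=
        Nat.factorization_ordCompl m q₂
      have hq3c : q₃ ∈ c.primeFactors := by
        rw [← Nat.support_factorization, Finsupp.mem_support_iff, hcfac,
          Finsupp.erase_ne h23.symm, ← Finsupp.mem_support_iff, Nat.support_factorization]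
        exact hq3m
      -- each of a, b, c exceeds 2
      have hae1 : k.factorization q₁ ≠ 0 := by
        rw [← Finsupp.mem_support_iff, Nat.support_factorization]; exact hq1
      have hbe1 : m.factorization q₂ ≠ 0 := by
        rw [← Finsupp.mem_support_iff, Nat.support_factorization]; exact hq2m
      have h2a : 2 < a := lt_of_lt_of_le (by omega) (Nat.le_self_pow hae1 q₁)
      have h2b : 2 < b := lt_of_lt_of_le (by omega) (Nat.le_self_pow hbe1 q₂)
      have h2c : 2 < c := by
        have := Nat.le_of_dvd (Nat.pos_of_ne_zero hc0) (Nat.dvd_of_mem_primeFactors hq3c)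
        omega
      -- count square roots of 1
      have hk_eq : k = a * (b * c) := by rw [hbc, ham]
      have hNcast : sqCard (ZMod k)ˣ = sqCard (ZMod (a * (b * c)))ˣ := by rw [← hk_eq]
      have hN : sqCard (ZMod k)ˣ = sqCard (ZMod a)ˣ * (sqCard (ZMod b)ˣ * sqCard (ZMod c)ˣ) := by
        rw [hNcast, sqCard_zmod_mul a (b * c) (by rw [hbc]; exact hcop1),
          sqCard_zmod_mul b c hcop2]
      have hlow : 8 ≤ sqCard (ZMod k)ˣ := by
        rw [hN]
        calc (8 : ℕ) = 2 * (2 * 2) := rfl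
          _ ≤ _ := Nat.mul_le_mul (two_le_sqCard_zmod a h2a)
              (Nat.mul_le_mul (two_le_sqCard_zmod b h2b) (two_le_sqCard_zmod c h2c))
      omega
    -- conclude
    have hpos : 0 < k.primeFactors.card :=
      Finset.card_pos.mpr (Nat.nonempty_primeFactors.mpr hk1)
    have hfac : ∏ q ∈ k.primeFactors, q ^ k.factorization q = k := by
      rw [← Nat.prod_factorization_eq_prod_primeFactors]
      exact Nat.factorization_prod_pow_eq_self hk0
    interval_cases hcc : k.primeFactors.card
    · -- card = 1
      obtain ⟨ℓ, hset⟩ := Finset.card_eq_one.mp hcc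
      have hmem : ℓ ∈ k.primeFactors := by rw [hset]; exact Finset.mem_singleton_self ℓ
      obtain ⟨hlp, hlo, _⟩ := hodd_of_mem _ hmem
      have hrpos : 0 < k.factorization ℓ := Nat.pos_of_ne_zero (by
        rw [← Finsupp.mem_support_iff, Nat.support_factorization]; exact hmem)
      refine Or.inl ⟨ℓ, k.factorization ℓ, hlp, hlo, hrpos, ?_⟩
      conv_lhs => rw [← hfac, hset]
      rw [Finset.prod_singleton]
    · -- card = 2
      obtain ⟨ℓ₁, ℓ₂, hne, hset⟩ := Finset.card_eq_two.mp hcc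
      have hmem1 : ℓ₁ ∈ k.primeFactors := by rw [hset]; simp
      have hmem2 : ℓ₂ ∈ k.primeFactors := by rw [hset]; simp
      obtain ⟨h1p, h1o, _⟩ := hodd_of_mem _ hmem1
      obtain ⟨h2p, h2o, _⟩ := hodd_of_mem _ hmem2
      have hr1 : 0 < k.factorization ℓ₁ := Nat.pos_of_ne_zero (by
        rw [← Finsupp.mem_support_iff, Nat.support_factorization]; exact hmem1)
      have hr2 : 0 < k.factorization ℓ₂ := Nat.pos_of_ne_zero (by
        rw [← Finsupp.mem_support_iff, Nat.support_factorization]; exact hmem2)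
      refine Or.inr ⟨ℓ₁, ℓ₂, k.factorization ℓ₁, k.factorization ℓ₂,
        h1p, h2p, h1o, h2o, hne, hr1, hr2, ?_⟩
      conv_lhs => rw [← hfac, hset]
      rw [Finset.prod_pair hne]
end

section
/- Let χ be a multiplicative character of F_q = F_{p^m} of order k, where k | q - 1 and k is odd with k > 2. Let σ_p be the automorphism of ℚ(ζ_k) sending ζ_k to ζ_k^p. Then σ_p(K(χ)) = K(χ), i.e., K(χ) = χ(4)J(χ,χ) is fixed by σ_p, and hence K(χ) lies in the fixed field of σ_p, which has degree [(ℤ/kℤ)^* : ⟨p⟩] over ℚ. -/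
/-- Let `χ` be a multiplicative character of the finite field `F` with
`p^m` elements, of odd order `k > 2`, taking values in the group generated by a primitive
`k`-th root of unity `ζ ∈ ℂ`.  If `σ` is the automorphism of `ℚ(ζ_k)` with `σ(ζ) = ζ^p`
(viewed via any ring embedding `σ : ℂ →+* ℂ` satisfying `σ ζ = ζ^p`), then
`σ(K(χ)) = K(χ)` where `K(χ) = χ(4) * J(χ,χ)`; i.e. `K(χ)` is fixed by `σ_p`. -/
theorem slce_stmt_12 (p m k : ℕ) (hp : p.Prime) (hpodd : Odd p)
    (F : Type*) [Field F] [Fintype F] [DecidableEq F]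
    (hcard : Fintype.card F = p ^ m)
    (hk : Odd k) (hk2 : 2 < k)
    (χ : MulChar F ℂ) (hord : orderOf χ = k)
    (ζ : ℂ) (hζ : IsPrimitiveRoot ζ k)
    (hvals : ∀ x : F, x ≠ 0 → ∃ n : ℕ, χ x = ζ ^ n)
    (σ : ℂ →+* ℂ) (hσ : σ ζ = ζ ^ p) :
    σ (χ 4 * jacobiSum χ χ) = χ 4 * jacobiSum χ χ := by
  -- characteristic of F is p
  have hfact : Fact p.Prime := ⟨hp⟩
  have hchar : CharP F p := by
    have hrchar : CharP F (ringChar F) := ringChar.charP F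
    obtain ⟨n, hr, hcardr⟩ := FiniteField.card F (ringChar F)
    have hpow : (ringChar F) ^ (n : ℕ) = p ^ m := by rw [← hcardr, hcard]
    have hdvd : ringChar F ∣ p ^ m := hpow ▸ dvd_pow_self _ n.2.ne'
    have hqp : ringChar F = p :=
      (Nat.prime_dvd_prime_iff_eq hr hp).mp (hr.dvd_of_dvd_pow hdvd)
    exact hqp ▸ hrchar
  -- σ ∘ χ = χ ∘ (·^p)
  have key : ∀ x : F, σ (χ x) = χ (x ^ p) := by
    intro x
    rcases eq_or_ne x 0 with rfl | hx
    · rw [χ.map_zero, map_zero, zero_pow hp.ne_zero, χ.map_zero]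
    · obtain ⟨n, hn⟩ := hvals x hx
      rw [hn, map_pow, hσ, ← pow_mul, mul_comm, pow_mul, ← hn, ← map_pow]
  have h4 : σ (χ 4) = χ 4 := by
    have h4p : ((4 : F)) ^ p = 4 := by
      have := map_natCast (frobenius F p) 4
      simpa [frobenius_def] using this
    rw [key 4, h4p]
  have hJ : σ (jacobiSum χ χ) = jacobiSum χ χ := by
    rw [jacobiSum, map_sum]
    have : ∀ x : F, σ (χ x * χ (1 - x)) = χ (x ^ p) * χ (1 - x ^ p) := by
      intro x
      rw [map_mul, key, key, sub_pow_char, one_pow]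
    simp_rw [this]
    exact Fintype.sum_bijective (frobeniusEquiv F p) (frobeniusEquiv F p).bijective _ _
      (fun x => rfl)
  rw [map_mul, h4, hJ]
end

section
/- Let k be an odd positive integer dividing q−1, q an odd prime power, and χ a multiplicative character of F_q of order k. Then K(χ) = χ(4)J(χ,χ) satisfies K(χ) ≡ -q (mod 2(1 − ζ_k)) in ℤ[ζ_k]; in particular K(χ) ≡ 1 (mod 2), i.e., (K(χ)+1)/2 ∈ ℤ[ζ_k]. -/
private lemma even_sum_aux {M α : Type*} [CommRing M] [DecidableEq α] (s : Finset α)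
    (g : ∀ a ∈ s, α) (f : α → M) (hsymm : ∀ a (ha : a ∈ s), f (g a ha) = f a)
    (hgmem : ∀ a (ha : a ∈ s), g a ha ∈ s) (hne : ∀ a (ha : a ∈ s), g a ha ≠ a)
    (hinv : ∀ a (ha : a ∈ s), g (g a ha) (hgmem a ha) = a) :
    ∃ d : M, ∑ x ∈ s, f x = d + d := by
  suffices h : (2 : M) ∣ ∑ x ∈ s, f x by
    obtain ⟨d, hd⟩ := h; exact ⟨d, by rw [hd]; ring⟩
  have h0 : Ideal.Quotient.mk (Ideal.span {(2:M)}) (∑ x ∈ s, f x) = 0 := by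
    rw [map_sum]
    refine Finset.sum_involution g (fun a ha => ?_) (fun a ha _ => hne a ha)
      hgmem hinv
    rw [hsymm a ha, ← map_add, show f a + f a = 2 * f a by ring, map_mul,
      Ideal.Quotient.eq_zero_iff_mem.mpr (Ideal.mem_span_singleton_self _), zero_mul]
  rwa [Ideal.Quotient.eq_zero_iff_mem, Ideal.mem_span_singleton] at h0

private lemma even_sum_mem (B : Subalgebra ℤ ℂ) {α : Type*} [DecidableEq α] (s : Finset α)
    (g : α → α) (f : α → ℂ) (hfB : ∀ a ∈ s, f a ∈ B) (hsymm : ∀ a ∈ s, f (g a) = f a)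
    (hgmem : ∀ a ∈ s, g a ∈ s) (hne : ∀ a ∈ s, g a ≠ a) (hinv : ∀ a ∈ s, g (g a) = a) :
    ∃ d ∈ B, ∑ x ∈ s, f x = 2 * d := by
  classical
  set f' : {x // x ∈ s} → B := fun x => ⟨f x, hfB x x.2⟩ with hf'
  have key : ∃ D : B, ∑ x ∈ s.attach, f' x = D + D := by
    refine even_sum_aux s.attach
      (fun x _ => (⟨g x, hgmem x x.2⟩ : {x // x ∈ s})) f' ?_ ?_ ?_ ?_
    · intro a _
      exact Subtype.ext (hsymm a a.2)
    · intro a _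
      exact Finset.mem_attach _ _
    · intro a _
      intro h
      exact hne a a.2 (congrArg Subtype.val h)
    · intro a _
      exact Subtype.ext (hinv a a.2)
  obtain ⟨D, hD⟩ := key
  refine ⟨(D : ℂ), D.2, ?_⟩
  have h1 : ∑ x ∈ s, f x = ((∑ x ∈ s.attach, f' x : B) : ℂ) := by
    rw [AddSubmonoidClass.coe_finset_sum]
    rw [← Finset.sum_attach s f]
  rw [h1, hD]
  push_cast
  ring

/-- Let `q` be an odd prime power, `k ∣ q - 1` odd with `k > 1`, and `χ` a
multiplicative character of `F_q` of exact order `k` with values in `ℤ[ζ_k] ⊂ ℂ`.  Then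
`K(χ) = χ(4) J(χ,χ)` satisfies `K(χ) ≡ -q (mod 2(1 - ζ_k))` in `ℤ[ζ_k]`; in particular
`K(χ) ≡ 1 (mod 2)`, i.e. `(K(χ) + 1)/2 ∈ ℤ[ζ_k]`. -/
theorem slce_stmt_17 (F : Type*) [Field F] [Fintype F] [DecidableEq F]
    (hF : ringChar F ≠ 2) (k : ℕ) (hk : Odd k) (hk1 : 1 < k)
    (hkq : k ∣ Fintype.card F - 1)
    (ζ : ℂ) (hζ : IsPrimitiveRoot ζ k)
    (χ : MulChar F ℂ) (hord : orderOf χ = k)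
    (hvals : ∀ x : F, x ≠ 0 → ∃ n : ℕ, χ x = ζ ^ n) :
    (∃ δ ∈ Algebra.adjoin ℤ ({ζ} : Set ℂ),
        χ 4 * jacobiSum χ χ + (Fintype.card F : ℂ) = 2 * (1 - ζ) * δ) ∧
    (∃ ε ∈ Algebra.adjoin ℤ ({ζ} : Set ℂ),
        χ 4 * jacobiSum χ χ + 1 = 2 * ε) := by
  classical
  have hk0 : k ≠ 0 := by omega
  obtain ⟨m, hm⟩ := hk
  haveI : NeZero k := ⟨hk0⟩
  set A := Algebra.adjoin ℤ ({ζ} : Set ℂ) with hA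
  have hζA : ζ ∈ A := Algebra.self_mem_adjoin_singleton ℤ ζ
  have hχk : χ ^ k = 1 := by rw [← hord]; exact pow_orderOf_eq_one χ
  have hmem : ∀ x : F, x ≠ 0 → χ x ∈ A := by
    intro x hx
    obtain ⟨n, hn⟩ := hvals x hx
    rw [hn]; exact pow_mem hζA n
  have h2 : (2 : F) ≠ 0 := Ring.two_ne_zero hF
  have h4 : (4 : F) ≠ 0 := by
    have h42 : (4 : F) = 2 * 2 := by norm_num
    rw [h42]; exact mul_ne_zero h2 h2
  have hqodd : Fintype.card F % 2 = 1 := FiniteField.odd_card_of_char_ne_two hF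
  have hq1 : 1 ≤ Fintype.card F := Fintype.card_pos
  obtain ⟨n4, hn4⟩ := hvals 4 h4
  have huA : χ 4 ∈ A := by rw [hn4]; exact pow_mem hζA n4
  have hinv20 : (2:F)⁻¹ ≠ 0 := inv_ne_zero h2
  have hinv21 : (2:F)⁻¹ ≠ 1 := by
    intro h
    rw [inv_eq_one] at h
    have h10 : (1:F) = 0 := by linear_combination h
    exact one_ne_zero h10
  have h12 : (1:F) - (2:F)⁻¹ = (2:F)⁻¹ := by
    field_simp
    norm_num
  set T : Finset F := Finset.univ \ {0, 1, (2:F)⁻¹} with hT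
  have hmemT : ∀ x : F, x ∈ T ↔ x ≠ 0 ∧ x ≠ 1 ∧ x ≠ (2:F)⁻¹ := by
    intro x
    simp [hT, not_or]
  -- the even part of the restricted sum
  have key : ∃ d ∈ A, ∑ x ∈ T, χ x * χ (1 - x) = 2 * d := by
    refine even_sum_mem A T (fun x => 1 - x) (fun x => χ x * χ (1 - x)) ?_ ?_ ?_ ?_ ?_
    · intro a ha
      obtain ⟨ha0, ha1, _⟩ := (hmemT a).mp ha
      exact mul_mem (hmem a ha0) (hmem (1-a) (sub_ne_zero_of_ne (Ne.symm ha1)))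
    · intro a _
      show χ (1-a) * χ (1 - (1-a)) = χ a * χ (1 - a)
      rw [sub_sub_cancel, mul_comm]
    · intro a ha
      obtain ⟨ha0, ha1, ha2⟩ := (hmemT a).mp ha
      rw [hmemT]
      refine ⟨sub_ne_zero_of_ne (Ne.symm ha1), ?_, ?_⟩
      · intro h
        exact ha0 (by linear_combination -h)
      · intro h
        exact ha2 (by linear_combination h12 - h)
    · intro a ha
      obtain ⟨_, _, ha2⟩ := (hmemT a).mp ha
      intro h
      apply ha2
      field_simp
      linear_combination -h
    · intro a _
      exact sub_sub_cancel 1 a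
  obtain ⟨d, hdA, hdsum⟩ := key
  -- decompose the Jacobi sum
  have hmem2 : (2:F)⁻¹ ∈ Finset.univ \ ({0, 1} : Finset F) := by
    simp [hinv20, hinv21]
  have hTdiff : (Finset.univ \ ({0, 1} : Finset F)) \ {(2:F)⁻¹} = T := by
    rw [hT]
    ext x
    simp [not_or, and_assoc]
  have hJ : jacobiSum χ χ = χ (2:F)⁻¹ * χ (2:F)⁻¹ + 2 * d := by
    rw [jacobiSum_eq_sum_sdiff,
      Finset.sum_eq_sum_sdiff_singleton_add hmem2 (fun x => χ x * χ (1-x)), hTdiff, hdsum, h12]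
    ring
  have hone : χ 4 * (χ (2:F)⁻¹ * χ (2:F)⁻¹) = 1 := by
    rw [← map_mul, ← map_mul]
    have h41 : (4:F) * ((2:F)⁻¹ * (2:F)⁻¹) = 1 := by
      field_simp
      norm_num
    rw [h41, map_one]
  have hK : χ 4 * jacobiSum χ χ = 1 + 2 * (χ 4 * d) := by
    rw [hJ]
    linear_combination hone
  -- second part
  have hεA : (1 : ℂ) + χ 4 * d ∈ A := add_mem (one_mem A) (mul_mem huA hdA)
  refine ⟨?_, ⟨1 + χ 4 * d, hεA, by rw [hK]; ring⟩⟩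
  -- first part
  obtain ⟨z, hzA, hz⟩ :=
    exists_jacobiSum_eq_neg_one_add (by omega : 2 < k) hχk hχk hkq hζ
  have hJA : jacobiSum χ χ ∈ A := jacobiSum_mem_algebraAdjoin_of_pow_eq_one hχk hχk hζ
  -- k = (1-ζ) * c
  have hgeo : ∑ i ∈ Finset.range k, ζ ^ i = 0 := hζ.geom_sum_eq_zero hk1
  set c : ℂ := ∑ i ∈ Finset.range k, ∑ j ∈ Finset.range i, ζ ^ j with hc
  have hcA : c ∈ A := Subalgebra.sum_mem _ fun i _ => Subalgebra.sum_mem _ fun j _ => pow_mem hζA j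
  have hkc : (k : ℂ) = (1 - ζ) * c := by
    have hterm : ∀ i, (1 - ζ) * ∑ j ∈ Finset.range i, ζ ^ j = 1 - ζ ^ i := by
      intro i
      linear_combination -geom_sum_mul ζ i
    calc (k:ℂ) = ∑ i ∈ Finset.range k, (1 - ζ^i) := by
          rw [Finset.sum_sub_distrib, hgeo, sub_zero, Finset.sum_const, Finset.card_range,
            nsmul_eq_mul, mul_one]
      _ = (1-ζ) * c := by
          rw [hc, Finset.mul_sum]
          exact Finset.sum_congr rfl fun i _ => (hterm i).symm
  -- geometric sum for χ 4 - 1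
  set G : ℂ := ∑ j ∈ Finset.range n4, ζ ^ j with hGdef
  have hGA : G ∈ A := Subalgebra.sum_mem _ fun j _ => pow_mem hζA j
  have hG : G * (ζ - 1) = ζ ^ n4 - 1 := geom_sum_mul ζ n4
  -- arithmetic data
  obtain ⟨t, ht⟩ := hkq
  have htC : (Fintype.card F : ℂ) - 1 = (k:ℂ) * t := by
    have h1 : ((Fintype.card F - 1 : ℕ) : ℂ) = ((k*t : ℕ) : ℂ) := by rw [ht]
    rw [Nat.cast_sub hq1] at h1
    push_cast at h1
    exact h1
  obtain ⟨r, hr⟩ := Nat.odd_iff.mpr hqodd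
  obtain ⟨s, hs⟩ : ∃ s : ℕ, Fintype.card F + 1 = 2*s := ⟨r + 1, by omega⟩
  have hsC : (Fintype.card F : ℂ) + 1 = 2 * s := by exact_mod_cast congrArg (Nat.cast (R := ℂ)) hs
  have hmC : (k : ℂ) = 2 * m + 1 := by exact_mod_cast congrArg (Nat.cast (R := ℂ)) hm
  -- the two divisibilities
  set J : ℂ := jacobiSum χ χ with hJdef
  set X : ℂ := χ 4 * J + (Fintype.card F : ℂ) with hX
  set w : ℂ := -(G * J) + z * (1 - ζ) + c * t with hw
  have hwA : w ∈ A :=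
    add_mem (add_mem (neg_mem (mul_mem hGA hJA)) (mul_mem hzA (sub_mem (one_mem A) hζA)))
      (mul_mem hcA (Subalgebra.natCast_mem A t))
  set v : ℂ := (s : ℂ) + χ 4 * d with hv
  have hvA : v ∈ A := add_mem (Subalgebra.natCast_mem A s) (mul_mem huA hdA)
  have hXw : X = (1 - ζ) * w := by
    rw [hX, hw]
    linear_combination J * hn4 - J * hG + hz + htC + (t:ℂ) * hkc
  have hXv : X = 2 * v := by
    rw [hX, hv]
    linear_combination hK + hsC
  refine ⟨-(m:ℂ) * w + c * v, add_mem (mul_mem (neg_mem (Subalgebra.natCast_mem A m)) hwA)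
    (mul_mem hcA hvA), ?_⟩
  have hfin : X = 2 * (1 - ζ) * (-(m:ℂ) * w + c * v) := by
    linear_combination (-2*(m:ℂ)) * hXw + ((1-ζ)*c) * hXv + X * hkc - X * hmC
  rw [hX] at hfin
  exact hfin
end

section
/- Let a_0 a_1 a_2 … be the SLCE sequence of period q−1 over F_2, where s_t = 1 iff α^t ∈ D = {α^{2i+1} − 1 : i} ∩ F_q^*. Then the sequence is balanced: the number of indices t with 0 ≤ t ≤ q−2 and s_t = 1 equals (q−1)/2. -/
/-!
If `α` generates `F_qˣ`, the odd powers of `α` are exactly the non-squares of `F_qˣ`: since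
`q - 1` is even, an odd power can never equal an even one. Hence `D + 1` is the set of
non-squares (and `1`, a square, is never hit, so the condition `y ≠ 0` is automatic). Squaring
on the cyclic group `F_qˣ` of even order has a kernel of order `2`, so exactly half of its
elements are squares.
-/

section CyclicGroup

variable {G : Type*}

theorem exists_odd_pow_iff_not_isSquare [Group G] [Finite G] {g x : G}
    (hg : ∀ y : G, y ∈ Submonoid.powers g) (hG : Even (Nat.card G)) :
    (∃ i : ℕ, x = g ^ (2 * i + 1)) ↔ ¬IsSquare x := by
  constructor
  · rintro ⟨i, rfl⟩ ⟨y, hy⟩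
    obtain ⟨k, rfl⟩ := hg y
    have hord : orderOf g = Nat.card G :=
      orderOf_eq_card_of_forall_mem_zpowers fun y => mem_powers_iff_mem_zpowers.mp (hg y)
    rw [← pow_add, pow_eq_pow_iff_modEq, hord] at hy
    have := hy.of_dvd hG.two_dvd
    simp only [Nat.ModEq] at this
    omega
  · intro hx
    obtain ⟨n, rfl⟩ := hg x
    obtain ⟨i, rfl | rfl⟩ := Nat.even_or_odd' n
    · exact absurd ((even_two_mul i).isSquare_pow g) hx
    · exact ⟨i, rfl⟩

theorem IsCyclic.card_not_isSquare [CommGroup G] [IsCyclic G] [Finite G]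
    (hG : Even (Nat.card G)) : Nat.card {x : G // ¬IsSquare x} = Nat.card G / 2 := by
  have hsq : Nat.card {x : G // IsSquare x} = Nat.card G / 2 := by
    have hrange := IsCyclic.card_powMonoidHom_range G 2
    rw [Nat.gcd_eq_right hG.two_dvd] at hrange
    rw [← hrange]
    refine Nat.card_congr (Equiv.subtypeEquivRight fun x => ?_)
    simp [isSquare_iff_exists_sq, eq_comm]
  have hcompl := Set.ncard_add_ncard_compl {x : G | IsSquare x}
  rw [← Nat.card_coe_set_eq, ← Nat.card_coe_set_eq] at hcompl
  change Nat.card {x // IsSquare x} + Nat.card {x // ¬IsSquare x} = _ at hcompl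
  have := hG.two_dvd
  omega

end CyclicGroup

theorem setOf_odd_pow_sub_one_eq_image {F : Type*} [Field F] [Finite F] {u : Fˣ}
    (hu : ∀ v : Fˣ, v ∈ Submonoid.powers u) (heven : Even (Nat.card Fˣ)) :
    {y : F | y ≠ 0 ∧ ∃ i : ℕ, y = (u : F) ^ (2 * i + 1) - 1} =
      (fun v : Fˣ => (v : F) - 1) '' {v | ¬IsSquare v} := by
  ext y
  constructor
  · rintro ⟨-, i, rfl⟩
    exact ⟨u ^ (2 * i + 1), (exists_odd_pow_iff_not_isSquare hu heven).mp ⟨i, rfl⟩, by simp⟩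
  · rintro ⟨v, hv, rfl⟩
    obtain ⟨i, rfl⟩ := (exists_odd_pow_iff_not_isSquare hu heven).mpr hv
    refine ⟨sub_ne_zero.mpr fun h => hv ?_, i, by simp⟩
    rw [Units.val_eq_one.mp h]
    exact IsSquare.one

theorem slce_stmt_19_general (F : Type*) [Field F] [Fintype F]
    (hF : ringChar F ≠ 2) (α : F)
    (hα : ∀ x : F, x ≠ 0 → ∃ n : ℕ, α ^ n = x) :
    Nat.card {y : F // y ≠ 0 ∧ ∃ i : ℕ, y = α ^ (2 * i + 1) - 1} =
      (Fintype.card F - 1) / 2 := by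
  have hα0 : α ≠ 0 := by
    rintro rfl
    obtain ⟨n, hn⟩ := hα 2 (Ring.two_ne_zero hF)
    rcases n with _ | n
    · exact one_ne_zero (by linear_combination -hn : (1 : F) = 0)
    · exact Ring.two_ne_zero hF (by simpa using hn.symm)
  have hu (v : Fˣ) : v ∈ Submonoid.powers (Units.mk0 α hα0) := by
    obtain ⟨n, hn⟩ := hα v v.ne_zero
    exact ⟨n, Units.ext (by simp [hn])⟩
  have heven : Even (Nat.card Fˣ) := by
    rw [Nat.card_units, Nat.card_eq_fintype_card]
    exact Nat.Odd.sub_odd (Nat.odd_iff.mpr (FiniteField.odd_card_of_char_ne_two hF)) odd_one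
  have hinj : Function.Injective fun v : Fˣ => (v : F) - 1 :=
    sub_left_injective.comp Units.val_injective
  rw [← Set.coe_ofPred, ← Units.val_mk0 hα0, setOf_odd_pow_sub_one_eq_image hu heven,
    Nat.card_image_of_injective hinj, Set.coe_ofPred, IsCyclic.card_not_isSquare heven,
    Nat.card_units, Nat.card_eq_fintype_card]

/-- The SLCE sequence is balanced: with `α` a generator of `F_qˣ` and
`D = {α^(2i+1) - 1 : i} ∩ F_qˣ`, the number of indices `t`, `0 ≤ t ≤ q - 2`, with
`s_t = 1` (equivalently, `|D|`) is `(q - 1)/2`. -/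
theorem slce_stmt_19 (F : Type*) [Field F] [Fintype F] [DecidableEq F]
    (hF : ringChar F ≠ 2) (α : F)
    (hα : ∀ x : F, x ≠ 0 → ∃ n : ℕ, α ^ n = x) :
    Nat.card {y : F // y ≠ 0 ∧ ∃ i : ℕ, y = α ^ (2 * i + 1) - 1} =
      (Fintype.card F - 1) / 2 :=
  slce_stmt_19_general F hF α hα
end
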